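/- arXiv:1404.7286 — 2 statements merged into one kernel-verified Lean document; each statement's English description precedes it below -/
import Mathlib

section
/- Let G be a nontrivial connected graph with a vertex v, and T a nontrivial tree with a vertex u. Let S be the star on |V(T)| vertices with center u. Then ρ((G(v)∘T(u))²) ≤ ρ((G(v)∘S(u))²), with equality if and only if T is a star centered at u. -/
/-!
Every edge of `(G(v)∘T(u))²` is an edge of `(G(v)∘S(u))²`: pairs inside `G` are unaffected, and
in `G(v)∘S(u)` the vertex `v` is adjacent to every other vertex of `S`, so those vertices lie within
distance two of each other and of the neighbours of `v`. The spectral radius is monotone under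
adding edges, and strictly so when the larger graph is connected: a nonnegative top eigenvector
of the smaller graph attains the Rayleigh maximum of the larger one, hence is an eigenvector of
it, hence positive, and then the two adjacency matrices must agree. Finally, equal squares force
`u` to be adjacent to every vertex of `T`, and an acyclic graph containing the star at `u` is
that star.
-/

open SimpleGraph Finset Matrix
open scoped Classical

/-- Spectral radius of a finite simple graph: the supremum of eigenvalues of its
adjacency matrix. -/
noncomputable def specRad {V : Type*} [Fintype V] (G : SimpleGraph V) : ℝ :=
  sSup {μ : ℝ | ∃ x : V → ℝ, x ≠ 0 ∧
    (Matrix.of fun i j => if G.Adj i j then (1 : ℝ) else 0) *ᵥ x = μ • x}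

/-- The square of a graph: join vertices at distance 1 or 2. -/
def gsq {V : Type*} (G : SimpleGraph V) : SimpleGraph V :=
  SimpleGraph.fromRel (fun a b => G.dist a b = 1 ∨ G.dist a b = 2)

/-- Coalescence `H₁(v) ∘ H₂(w)`: identify the vertex `v` of `H₁` with the vertex `w`
of `H₂` (the identified vertex is `Sum.inl v`). -/
def coal {V₁ V₂ : Type*} (H₁ : SimpleGraph V₁) (v : V₁) (H₂ : SimpleGraph V₂) (w : V₂) :
    SimpleGraph (V₁ ⊕ {x : V₂ // x ≠ w}) :=
  SimpleGraph.fromRel (fun a b =>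
    match a, b with
    | Sum.inl a, Sum.inl b => H₁.Adj a b
    | Sum.inl a, Sum.inr b => a = v ∧ H₂.Adj w b.1
    | Sum.inr a, Sum.inr b => H₂.Adj a.1 b.1
    | Sum.inr _, Sum.inl _ => False)

/-- The star on `n` vertices with center `0`. -/
def starGraph (n : ℕ) : SimpleGraph (Fin n) :=
  SimpleGraph.fromRel (fun a _ => a.val = 0)

/-- The star on a vertex set `V` centered at `u`. -/
def starAt {V : Type*} (u : V) : SimpleGraph V :=
  SimpleGraph.fromRel (fun a _ => a = u)

/-- A unicyclic graph: connected with exactly as many edges as vertices. -/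
def IsUnicyclic {V : Type*} [Fintype V] (G : SimpleGraph V) : Prop :=
  G.Connected ∧ G.edgeSet.ncard = Fintype.card V

/-- Degree of a vertex. -/
noncomputable def deg {V : Type*} [Fintype V] (G : SimpleGraph V) (v : V) : ℕ :=
  (Finset.univ.filter fun u => G.Adj v u).card

/-- Average degree of a finite graph, as a real number. -/
noncomputable def avgDeg {V : Type*} [Fintype V] (G : SimpleGraph V) : ℝ :=
  (∑ v, (deg G v : ℝ)) / Fintype.card V

/-- Maximum degree of a finite graph. -/
noncomputable def maxDeg {V : Type*} [Fintype V] (G : SimpleGraph V) : ℕ :=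
  Finset.univ.sup fun v => deg G v

namespace Matrix

variable {n : Type*} [Fintype n] {A B : Matrix n n ℝ}

theorem setOf_exists_mulVec_eq_smul_eq_spectrum {K : Type*} [Field K] (M : Matrix n n K) :
    {μ : K | ∃ x : n → K, x ≠ 0 ∧ M *ᵥ x = μ • x} = spectrum K M := by
  ext μ
  rw [Set.mem_ofPred_eq, ← spectrum_toLin', ← Module.End.hasEigenvalue_iff_mem_spectrum]
  constructor
  · rintro ⟨x, hx, hMx⟩
    exact Module.End.hasEigenvalue_of_hasEigenvector
      ⟨Module.End.mem_eigenspace_iff.mpr (by simpa using hMx), hx⟩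
  · intro hμ
    obtain ⟨x, hx⟩ := hμ.exists_hasEigenvector
    exact ⟨x, hx.2, by simpa using hx.apply_eq_smul⟩

theorem dotProduct_mulVec_eq_sum {R : Type*} [CommSemiring R] (M : Matrix n n R) (x y : n → R) :
    x ⬝ᵥ M *ᵥ y = ∑ i, ∑ j, x i * M i j * y j := by
  simp [dotProduct, mulVec, Finset.mul_sum, mul_assoc]

theorem dotProduct_mulVec_le_abs (hA : ∀ i j, 0 ≤ A i j) (x : n → ℝ) :
    x ⬝ᵥ A *ᵥ x ≤ |x| ⬝ᵥ A *ᵥ |x| := by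
  simp only [dotProduct_mulVec_eq_sum]
  refine sum_le_sum fun i _ => sum_le_sum fun j _ => ?_
  calc x i * A i j * x j ≤ |x i * A i j * x j| := le_abs_self _
    _ = |x| i * A i j * |x| j := by simp [abs_mul, abs_of_nonneg (hA i j)]

theorem dotProduct_mulVec_mono (hAB : ∀ i j, A i j ≤ B i j) {x : n → ℝ} (hx : 0 ≤ x) :
    x ⬝ᵥ A *ᵥ x ≤ x ⬝ᵥ B *ᵥ x := by
  simp only [dotProduct_mulVec_eq_sum]
  gcongr with i _ j _
  · exact hx j
  · exact hx i
  · exact hAB i j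

theorem eq_of_dotProduct_mulVec_eq (hAB : ∀ i j, A i j ≤ B i j) {x : n → ℝ}
    (hx : ∀ i, 0 < x i) (h : x ⬝ᵥ A *ᵥ x = x ⬝ᵥ B *ᵥ x) : A = B := by
  have hterm : ∀ i j, 0 ≤ x i * (B i j - A i j) * x j := fun i j =>
    mul_nonneg (mul_nonneg (hx i).le (sub_nonneg.mpr (hAB i j))) (hx j).le
  have hsum : ∑ i, ∑ j, x i * (B i j - A i j) * x j = 0 := by
    have : x ⬝ᵥ (B - A) *ᵥ x = 0 := by rw [sub_mulVec, dotProduct_sub, h, sub_self]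
    simpa [dotProduct_mulVec_eq_sum] using this
  ext i j
  have hij : x i * (B i j - A i j) * x j = 0 :=
    (sum_eq_zero_iff_of_nonneg fun j _ => hterm i j).mp
      ((sum_eq_zero_iff_of_nonneg fun i _ => sum_nonneg fun j _ => hterm i j).mp
        hsum i (mem_univ i)) j (mem_univ j)
  have hdiff : B i j - A i j = 0 := by simpa [(hx i).ne', (hx j).ne'] using hij
  linarith

theorem dotProduct_smul_one_sub_mulVec {R : Type*} [CommRing R] (M : Matrix n n R) (r : R)
    (x : n → R) : x ⬝ᵥ (r • 1 - M) *ᵥ x = r * (x ⬝ᵥ x) - x ⬝ᵥ M *ᵥ x := by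
  simp [sub_mulVec, dotProduct_sub, smul_mulVec, dotProduct_smul]

namespace IsHermitian

variable (hA : A.IsHermitian)
include hA

theorem le_sSup_spectrum {μ : ℝ} (hμ : μ ∈ spectrum ℝ A) : μ ≤ sSup (spectrum ℝ A) :=
  le_csSup (hA.spectrum_real_eq_range_eigenvalues ▸ (Set.finite_range _).bddAbove) hμ

theorem sSup_spectrum_mem [Nonempty n] : sSup (spectrum ℝ A) ∈ spectrum ℝ A := by
  rw [hA.spectrum_real_eq_range_eigenvalues]
  exact (Set.range_nonempty _).csSup_mem (Set.finite_range _)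

open MatrixOrder in
theorem posSemidef_sSup_spectrum_smul_one_sub : (sSup (spectrum ℝ A) • 1 - A).PosSemidef := by
  have := le_algebraMap_of_spectrum_le (A := Matrix n n ℝ) (fun _ => hA.le_sSup_spectrum) hA
  simpa [Matrix.le_iff, Algebra.algebraMap_eq_smul_one] using this

theorem dotProduct_mulVec_le (x : n → ℝ) :
    x ⬝ᵥ A *ᵥ x ≤ sSup (spectrum ℝ A) * (x ⬝ᵥ x) := by
  have := hA.posSemidef_sSup_spectrum_smul_one_sub.dotProduct_mulVec_nonneg x
  rw [star_trivial, dotProduct_smul_one_sub_mulVec] at this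
  linarith

theorem mulVec_eq_smul_of_dotProduct_mulVec_eq {x : n → ℝ}
    (h : x ⬝ᵥ A *ᵥ x = sSup (spectrum ℝ A) * (x ⬝ᵥ x)) : A *ᵥ x = sSup (spectrum ℝ A) • x := by
  have := (hA.posSemidef_sSup_spectrum_smul_one_sub.dotProduct_mulVec_zero_iff x).mp
    (by rw [star_trivial, dotProduct_smul_one_sub_mulVec, h, sub_self])
  rw [sub_mulVec, smul_mulVec, one_mulVec, sub_eq_zero] at this
  exact this.symm

end IsHermitian

end Matrix

namespace SimpleGraph

variable {V : Type*} {G H : SimpleGraph V}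

theorem adjMatrix_nonneg (G : SimpleGraph V) (i j : V) : 0 ≤ G.adjMatrix ℝ i j := by
  rw [adjMatrix_apply]; split_ifs <;> norm_num

theorem adjMatrix_le_adjMatrix (h : G ≤ H) (i j : V) : G.adjMatrix ℝ i j ≤ H.adjMatrix ℝ i j := by
  simp only [adjMatrix_apply]
  split_ifs with hG hH <;> first | exact absurd (h hG) hH | norm_num

section SpectralRadius

variable [Fintype V]

theorem specRad_eq_sSup_spectrum (G : SimpleGraph V) :
    specRad G = sSup (spectrum ℝ (G.adjMatrix ℝ)) := by
  rw [specRad, setOf_exists_mulVec_eq_smul_eq_spectrum]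
  rfl

theorem dotProduct_adjMatrix_mulVec_le (G : SimpleGraph V) (x : V → ℝ) :
    x ⬝ᵥ G.adjMatrix ℝ *ᵥ x ≤ specRad G * (x ⬝ᵥ x) := by
  rw [specRad_eq_sSup_spectrum]
  exact (G.isHermitian_adjMatrix ℝ).dotProduct_mulVec_le x

theorem adjMatrix_mulVec_eq_of_dotProduct_mulVec_eq {x : V → ℝ}
    (h : x ⬝ᵥ G.adjMatrix ℝ *ᵥ x = specRad G * (x ⬝ᵥ x)) :
    G.adjMatrix ℝ *ᵥ x = specRad G • x := by
  rw [specRad_eq_sSup_spectrum] at h ⊢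
  exact (G.isHermitian_adjMatrix ℝ).mulVec_eq_smul_of_dotProduct_mulVec_eq h

theorem exists_nonneg_adjMatrix_mulVec_eq_specRad_smul [Nonempty V] (G : SimpleGraph V) :
    ∃ x : V → ℝ, 0 ≤ x ∧ x ≠ 0 ∧ G.adjMatrix ℝ *ᵥ x = specRad G • x := by
  obtain ⟨x, hx, hAx⟩ : ∃ x : V → ℝ, x ≠ 0 ∧ G.adjMatrix ℝ *ᵥ x = specRad G • x := by
    have := (G.isHermitian_adjMatrix ℝ).sSup_spectrum_mem
    rwa [← specRad_eq_sSup_spectrum, ← setOf_exists_mulVec_eq_smul_eq_spectrum] at this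
  refine ⟨|x|, abs_nonneg x, by simpa using hx, adjMatrix_mulVec_eq_of_dotProduct_mulVec_eq ?_⟩
  refine le_antisymm (G.dotProduct_adjMatrix_mulVec_le _) ?_
  calc specRad G * (|x| ⬝ᵥ |x|) = x ⬝ᵥ G.adjMatrix ℝ *ᵥ x := by
        rw [hAx, dotProduct_smul, smul_eq_mul]
        simp [dotProduct, abs_mul_abs_self]
    _ ≤ |x| ⬝ᵥ G.adjMatrix ℝ *ᵥ |x| := dotProduct_mulVec_le_abs G.adjMatrix_nonneg x

theorem pos_of_adjMatrix_mulVec_eq_smul (hG : G.Connected) {x : V → ℝ} (hx0 : 0 ≤ x)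
    (hx : x ≠ 0) {μ : ℝ} (h : G.adjMatrix ℝ *ᵥ x = μ • x) (i : V) : 0 < x i := by
  -- if `x b = 0` then `0 = μ x b = ∑_{a ~ b} x a`, so `x` vanishes on all neighbours of `b`
  have hadj : ∀ a b, G.Adj a b → 0 < x a → 0 < x b := by
    intro a b hab ha
    refine lt_of_le_of_ne (hx0 b) fun hb => ?_
    have : (G.adjMatrix ℝ *ᵥ x) b = 0 := by rw [h, Pi.smul_apply, ← hb, smul_zero]
    rw [adjMatrix_mulVec_apply, Finset.sum_eq_zero_iff_of_nonneg (fun j _ => hx0 j)] at this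
    exact ha.ne' (this a ((mem_neighborFinset _ _ _).mpr hab.symm))
  obtain ⟨i₀, hi₀⟩ := Function.ne_iff.mp hx
  by_contra hi
  obtain ⟨d, -, hd, hd'⟩ :=
    (hG.preconnected i₀ i).some.exists_boundary_dart {j | 0 < x j} ((hx0 i₀).lt_of_ne' hi₀) hi
  exact hd' (hadj _ _ d.adj hd)

theorem specRad_mono [Nonempty V] (h : G ≤ H) : specRad G ≤ specRad H := by
  obtain ⟨x, hx0, hx, hGx⟩ := G.exists_nonneg_adjMatrix_mulVec_eq_specRad_smul
  have hxx : 0 < x ⬝ᵥ x := by simpa using dotProduct_star_self_pos_iff.mpr hx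
  have : specRad G * (x ⬝ᵥ x) ≤ specRad H * (x ⬝ᵥ x) :=
    calc specRad G * (x ⬝ᵥ x) = x ⬝ᵥ G.adjMatrix ℝ *ᵥ x := by
          rw [hGx, dotProduct_smul, smul_eq_mul]
      _ ≤ x ⬝ᵥ H.adjMatrix ℝ *ᵥ x := dotProduct_mulVec_mono (adjMatrix_le_adjMatrix h) hx0
      _ ≤ specRad H * (x ⬝ᵥ x) := H.dotProduct_adjMatrix_mulVec_le x
  exact le_of_mul_le_mul_right this hxx

theorem eq_of_le_of_specRad_eq (h : G ≤ H) (hH : H.Connected) (heq : specRad G = specRad H) :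
    G = H := by
  have := hH.nonempty
  obtain ⟨x, hx0, hx, hGx⟩ := G.exists_nonneg_adjMatrix_mulVec_eq_specRad_smul
  have hGxx : x ⬝ᵥ G.adjMatrix ℝ *ᵥ x = specRad G * (x ⬝ᵥ x) := by
    rw [hGx, dotProduct_smul, smul_eq_mul]
  have hHxx : x ⬝ᵥ H.adjMatrix ℝ *ᵥ x = specRad H * (x ⬝ᵥ x) :=
    le_antisymm (H.dotProduct_adjMatrix_mulVec_le x)
      (heq ▸ hGxx ▸ dotProduct_mulVec_mono (adjMatrix_le_adjMatrix h) hx0)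
  have hpos := pos_of_adjMatrix_mulVec_eq_smul hH hx0 hx
    (adjMatrix_mulVec_eq_of_dotProduct_mulVec_eq hHxx)
  have hA := eq_of_dotProduct_mulVec_eq (adjMatrix_le_adjMatrix h) hpos (by rw [hGxx, hHxx, heq])
  refine le_antisymm h fun a b hab => by_contra fun hG => ?_
  simpa [adjMatrix_apply, hab, hG] using congrFun₂ hA a b

end SpectralRadius

theorem gsq_adj {H : SimpleGraph V} {a b : V} :
    (gsq H).Adj a b ↔ a ≠ b ∧ (H.Adj a b ∨ ∃ c, H.Adj a c ∧ H.Adj c b) := by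
  have h2 : H.dist a b = 2 ↔ H.edist a b = 2 := by
    rw [dist, ENat.toNat_eq_iff two_ne_zero]; rfl
  simp only [gsq, fromRel_adj, dist_comm (u := b), dist_eq_one_iff_adj, h2, edist_eq_two_iff,
    H.adj_comm b a, Set.Nonempty, mem_commonNeighbors]
  tauto

theorem le_gsq (H : SimpleGraph V) : H ≤ gsq H := fun _ _ hab => gsq_adj.mpr ⟨hab.ne, .inl hab⟩

@[simp] theorem starAt_adj {u a b : V} : (starAt u).Adj a b ↔ a ≠ b ∧ (a = u ∨ b = u) :=
  fromRel_adj ..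

theorem IsAcyclic.eq_starAt_of_forall_adj {T : SimpleGraph V} (hT : T.IsAcyclic) {u : V}
    (h : ∀ b ≠ u, T.Adj u b) : T = starAt u := by
  ext a b
  refine ⟨fun hab => ⟨hab.ne, ?_⟩, ?_⟩
  · by_contra! hne
    exact hT (.cons hab (.cons (h b hne.2).symm (.cons (h a hne.1) .nil)))
      (by simp [Walk.cons_isCycle_iff, hne.1, hne.2, hne.1.symm, hab.ne.symm])
  · rintro ⟨hab, rfl | rfl⟩
    exacts [h b hab.symm, (h a hab).symm]

section Coalescence

variable {V₁ V₂ : Type*} {H₁ : SimpleGraph V₁} {v : V₁} {H₂ : SimpleGraph V₂} {w : V₂}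

@[simp] theorem coal_adj_inl_inl {a b : V₁} :
    (coal H₁ v H₂ w).Adj (.inl a) (.inl b) ↔ H₁.Adj a b := by
  simpa [coal, H₁.adj_comm b] using Adj.ne

@[simp] theorem coal_adj_inl_inr {a : V₁} {b : {x // x ≠ w}} :
    (coal H₁ v H₂ w).Adj (.inl a) (.inr b) ↔ a = v ∧ H₂.Adj w b := by
  simp [coal]

@[simp] theorem coal_adj_inr_inl {a : V₁} {b : {x // x ≠ w}} :
    (coal H₁ v H₂ w).Adj (.inr b) (.inl a) ↔ a = v ∧ H₂.Adj w b := by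
  simp [coal]

@[simp] theorem coal_adj_inr_inr {a b : {x // x ≠ w}} :
    (coal H₁ v H₂ w).Adj (.inr a) (.inr b) ↔ H₂.Adj a b := by
  simpa [coal, H₂.adj_comm b, Subtype.ext_iff] using Adj.ne

theorem gsq_coal_adj_inl_inl {a b : V₁} :
    (gsq (coal H₁ v H₂ w)).Adj (.inl a) (.inl b) ↔ (gsq H₁).Adj a b := by
  simp only [gsq_adj, ne_eq, Sum.inl.injEq, coal_adj_inl_inl, Sum.exists, coal_adj_inl_inr,
    coal_adj_inr_inl]
  aesop

theorem gsq_coal_adj_inl_inr {a : V₁} {b : {x // x ≠ w}} :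
    (gsq (coal H₁ v H₂ w)).Adj (.inl a) (.inr b) ↔
      a = v ∧ (gsq H₂).Adj w b ∨ H₁.Adj a v ∧ H₂.Adj w b := by
  simp only [gsq_adj, ne_eq, reduceCtorEq, not_false_eq_true, coal_adj_inl_inr, Sum.exists,
    coal_adj_inl_inl, coal_adj_inr_inr, true_and]
  aesop

theorem gsq_coal_adj_inr_inr {a b : {x // x ≠ w}} :
    (gsq (coal H₁ v H₂ w)).Adj (.inr a) (.inr b) ↔ (gsq H₂).Adj a b := by
  simp only [gsq_adj, ne_eq, Sum.inr.injEq, Subtype.ext_iff, coal_adj_inr_inr, Sum.exists,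
    coal_adj_inr_inl, coal_adj_inl_inr, Subtype.exists]
  refine and_congr_right fun _ => or_congr_right ⟨?_, ?_⟩
  · rintro (⟨_, ⟨-, ha⟩, -, hb⟩ | ⟨c, -, hac, hcb⟩)
    exacts [⟨w, ha.symm, hb⟩, ⟨c, hac, hcb⟩]
  · rintro ⟨c, hac, hcb⟩
    by_cases hc : c = w
    · subst hc
      exact .inl ⟨v, ⟨rfl, hac.symm⟩, rfl, hcb⟩
    · exact .inr ⟨c, hc, hac, hcb⟩

theorem gsq_coal_le_gsq_coal_starAt (H₁ : SimpleGraph V₁) (v : V₁) (H₂ : SimpleGraph V₂)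
    (w : V₂) :
    gsq (coal H₁ v H₂ w) ≤ gsq (coal H₁ v (starAt w) w) := by
  have hstar (b : {x // x ≠ w}) : (starAt w).Adj w b := starAt_adj.mpr ⟨b.2.symm, .inl rfl⟩
  have inl_inr (a : V₁) (b : {x // x ≠ w}) (h : (gsq (coal H₁ v H₂ w)).Adj (.inl a) (.inr b)) :
      (gsq (coal H₁ v (starAt w) w)).Adj (.inl a) (.inr b) := by
    rcases gsq_coal_adj_inl_inr.mp h with ⟨rfl, -⟩ | ⟨ha, -⟩
    exacts [gsq_coal_adj_inl_inr.mpr (.inl ⟨rfl, le_gsq _ (hstar b)⟩),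
      gsq_coal_adj_inl_inr.mpr (.inr ⟨ha, hstar b⟩)]
  rintro (a | a) (b | b) h
  · exact gsq_coal_adj_inl_inl.mpr (gsq_coal_adj_inl_inl.mp h)
  · exact inl_inr a b h
  · exact (inl_inr b a h.symm).symm
  · have hab := (gsq_coal_adj_inr_inr.mp h).ne
    exact gsq_coal_adj_inr_inr.mpr (gsq_adj.mpr ⟨hab, .inr ⟨w, (hstar a).symm, hstar b⟩⟩)

theorem Connected.coal_starAt (hH₁ : H₁.Connected) (v : V₁) (w : V₂) :
    (coal H₁ v (starAt w) w).Connected := by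
  have hreach : ∀ x, (coal H₁ v (starAt w) w).Reachable (.inl v) x := by
    rintro (a | b)
    · exact (hH₁.preconnected v a).map ⟨Sum.inl, coal_adj_inl_inl.mpr⟩
    · exact (coal_adj_inl_inr.mpr ⟨rfl, starAt_adj.mpr ⟨b.2.symm, .inl rfl⟩⟩).reachable
  exact connected_iff_exists_forall_reachable _ |>.mpr ⟨_, hreach⟩

theorem eq_starAt_of_gsq_coal_eq {a : V₁} (ha : H₁.Adj v a) (hH₂ : H₂.IsAcyclic)
    (h : gsq (coal H₁ v H₂ w) = gsq (coal H₁ v (starAt w) w)) : H₂ = starAt w := by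
  refine hH₂.eq_starAt_of_forall_adj fun b hb => ?_
  have hab : (gsq (coal H₁ v (starAt w) w)).Adj (.inl a) (.inr ⟨b, hb⟩) :=
    gsq_coal_adj_inl_inr.mpr (.inr ⟨ha.symm, starAt_adj.mpr ⟨hb.symm, .inl rfl⟩⟩)
  rw [← h, gsq_coal_adj_inl_inr] at hab
  rcases hab with ⟨rfl, -⟩ | ⟨-, hwb⟩
  exacts [absurd rfl ha.ne, hwb]

end Coalescence

end SimpleGraph

theorem specRad_sq_coal_tree_le_coal_star_general {V₁ V₂ : Type*} [Fintype V₁] [Fintype V₂]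
    (G : SimpleGraph V₁) (hG : G.Connected) (hG1 : 1 < Fintype.card V₁) (v : V₁)
    (T : SimpleGraph V₂) (hT : T.IsTree) (u : V₂) :
    specRad (gsq (coal G v T u)) ≤ specRad (gsq (coal G v (starAt u) u)) ∧
      (specRad (gsq (coal G v T u)) = specRad (gsq (coal G v (starAt u) u)) ↔
        T = starAt u) := by
  have hle := gsq_coal_le_gsq_coal_starAt G v T u
  have hconn : (gsq (coal G v (starAt u) u)).Connected :=
    (hG.coal_starAt v u).mono (le_gsq _)
  have := hconn.nonempty
  have := Fintype.one_lt_card_iff_nontrivial.mp hG1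
  obtain ⟨a, hva⟩ := hG.preconnected.exists_adj_of_nontrivial v
  refine ⟨specRad_mono hle, fun heq => ?_, fun hTu => by rw [hTu]⟩
  exact eq_starAt_of_gsq_coal_eq hva hT.isAcyclic (eq_of_le_of_specRad_eq hle hconn heq)

/-- Replacing a tree branch by a star at the same root does not
decrease the spectral radius of the square, with equality iff the tree was
already that star. -/
theorem specRad_sq_coal_tree_le_coal_star {V₁ V₂ : Type*} [Fintype V₁] [Fintype V₂]
    (G : SimpleGraph V₁) (hG : G.Connected) (hG1 : 1 < Fintype.card V₁) (v : V₁)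
    (T : SimpleGraph V₂) (hT : T.IsTree) (hT1 : 1 < Fintype.card V₂) (u : V₂) :
    specRad (gsq (coal G v T u)) ≤ specRad (gsq (coal G v (starAt u) u)) ∧
      (specRad (gsq (coal G v T u)) = specRad (gsq (coal G v (starAt u) u)) ↔
        T = starAt u) :=
  specRad_sq_coal_tree_le_coal_star_general G hG hG1 v T hT u
end

section
/- If U is a unicyclic graph on n ≥ 6 vertices whose girth g satisfies 5 ≤ g ≤ n−1, then the average degree of U² is greater than 4. -/
open SimpleGraph Finset Matrix
open scoped Classical

/-!
In a graph of girth at least 5, the vertices at distance 1 or 2 from `u` are the neighbours `v`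
of `u` together with the sets `N(v) \ {u}`, and these never overlap; so `u` has degree at
least `∑_{v ∼ u} d(v)` in the square, and summing over `u` the square has degree sum at least
`∑ d(v)²`. A unicyclic graph has `∑ d(v) = 2n`, hence `∑ d(v)² = 4n + ∑ (d(v) - 2)²`, which
exceeds `4n` unless the graph is 2-regular. Girth below `n` rules that out: the shortest cycle
misses a vertex, and where a path leaves the cycle there is a vertex of degree 3.
-/

namespace SimpleGraph

variable {V : Type*} {G : SimpleGraph V}

lemma not_adj_of_five_le_egirth (hG : 5 ≤ G.egirth) {u v w : V} (huv : G.Adj u v)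
    (hvw : G.Adj v w) (hwu : w ≠ u) : ¬ G.Adj u w := by
  intro huw
  have hc : (Walk.cons huv (.cons hvw (.cons huw.symm .nil))).IsCycle := by
    rw [Walk.cons_isCycle_iff]
    simp [huv.ne', hvw.ne, hwu, huw.ne]
  exact (hG.trans (egirth_le_length hc)).not_gt (by norm_num)

lemma eq_of_five_le_egirth (hG : 5 ≤ G.egirth) {u v w x : V} (huv : G.Adj u v)
    (hvx : G.Adj v x) (huw : G.Adj u w) (hwx : G.Adj w x) (hxu : x ≠ u) : v = w := by
  by_contra hvw
  have hc : (Walk.cons huv (.cons hvx (.cons hwx.symm (.cons huw.symm .nil)))).IsCycle := by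
    rw [Walk.cons_isCycle_iff]
    simp [huv.ne', hvx.ne, hwx.ne', huw.ne', hvw, hxu, hxu.symm]
  exact (hG.trans (egirth_le_length hc)).not_gt (by norm_num)

lemma gsq_adj_of_adj {u v : V} (h : G.Adj u v) : (gsq G).Adj u v :=
  (fromRel_adj _ _ _).mpr ⟨h.ne, .inl (.inl (dist_eq_one_iff_adj.mpr h))⟩

lemma gsq_adj_of_adj_of_adj {u v w : V} (huv : G.Adj u v) (hvw : G.Adj v w) (hwu : w ≠ u) :
    (gsq G).Adj u w := by
  by_cases huw : G.Adj u w
  · exact gsq_adj_of_adj huw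
  have hdist : G.dist u w = 2 := by
    have hle : G.dist u w ≤ 2 := dist_le (.cons huv (.cons hvw .nil))
    have hne0 : G.dist u w ≠ 0 := fun h =>
      hwu ((Reachable.dist_eq_zero_iff ⟨.cons huv (.cons hvw .nil)⟩).mp h).symm
    have hne1 : G.dist u w ≠ 1 := fun h => huw (dist_eq_one_iff_adj.mp h)
    omega
  exact (fromRel_adj _ _ _).mpr ⟨hwu.symm, .inl (.inr hdist)⟩

variable [Fintype V]

lemma sum_degree_neighborFinset_le_deg_gsq (hG : 5 ≤ G.egirth) (u : V) :
    ∑ v ∈ G.neighborFinset u, G.degree v ≤ deg (gsq G) u := by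
  set N := G.neighborFinset u
  set S := N.biUnion fun v => (G.neighborFinset v).erase u
  have hNS : Disjoint N S := by
    refine Finset.disjoint_left.mpr fun w huw hwS => ?_
    simp only [S, N, Finset.mem_biUnion, Finset.mem_erase, mem_neighborFinset] at huw hwS
    obtain ⟨v, huv, hwu, hvw⟩ := hwS
    exact not_adj_of_five_le_egirth hG huv hvw hwu huw
  have hS : S.card = ∑ v ∈ N, ((G.neighborFinset v).erase u).card := by
    refine Finset.card_biUnion fun v hv w hw hvw => Finset.disjoint_left.mpr ?_
    simp only [N, Finset.mem_erase, mem_neighborFinset, Finset.mem_coe] at hv hw ⊢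
    exact fun x ⟨hxu, hvx⟩ ⟨_, hwx⟩ => hvw (eq_of_five_le_egirth hG hv hvx hw hwx hxu)
  have hsub : N ∪ S ⊆ Finset.univ.filter fun w => (gsq G).Adj u w := by
    intro w hw
    simp only [N, S, Finset.mem_union, Finset.mem_biUnion, Finset.mem_erase,
      mem_neighborFinset] at hw
    rcases hw with huw | ⟨v, huv, hwu, hvw⟩
    · simpa using gsq_adj_of_adj huw
    · simpa using gsq_adj_of_adj_of_adj huv hvw hwu
  calc ∑ v ∈ N, G.degree v = ∑ v ∈ N, (((G.neighborFinset v).erase u).card + 1) := by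
        refine Finset.sum_congr rfl fun v hv => ?_
        rw [Finset.card_erase_add_one, card_neighborFinset_eq_degree]
        simpa [N, adj_comm] using hv
    _ = (N ∪ S).card := by
        rw [Finset.card_union_of_disjoint hNS, hS, Finset.sum_add_distrib, add_comm]
        simp
    _ ≤ deg (gsq G) u := Finset.card_le_card hsub

lemma sum_sum_neighborFinset {M : Type*} [AddCommMonoid M] (f : V → M) :
    ∑ u, ∑ v ∈ G.neighborFinset u, f v = ∑ v, G.degree v • f v := by
  simp only [neighborFinset_eq_filter, Finset.sum_filter]
  rw [Finset.sum_comm]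
  simp [← Finset.sum_filter, adj_comm, ← card_neighborFinset_eq_degree,
    neighborFinset_eq_filter]

lemma sum_degree_sq_le_sum_deg_gsq (hG : 5 ≤ G.egirth) :
    ∑ v, G.degree v ^ 2 ≤ ∑ v, deg (gsq G) v :=
  calc ∑ v, G.degree v ^ 2 = ∑ u, ∑ v ∈ G.neighborFinset u, G.degree v := by
        simp [sum_sum_neighborFinset, sq]
    _ ≤ ∑ v, deg (gsq G) v :=
        Finset.sum_le_sum fun u _ => sum_degree_neighborFinset_le_deg_gsq hG u

lemma Walk.IsCycle.exists_notMem_support {u : V} {c : G.Walk u u} (hc : c.IsCycle)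
    (hlt : c.length < Fintype.card V) : ∃ x, x ∉ c.support := by
  by_contra! h
  have : Fintype.card V ≤ c.length :=
    calc Fintype.card V = (Finset.univ : Finset V).card := Finset.card_univ.symm
      _ ≤ c.support.tail.toFinset.card := Finset.card_le_card fun x _ => by
          rcases (c.mem_support_iff).mp (h x) with rfl | hx
          · exact List.mem_toFinset.mpr (c.end_mem_tail_support hc.not_nil)
          · exact List.mem_toFinset.mpr hx
      _ ≤ c.support.tail.length := List.toFinset_card_le _
      _ = c.length := by simp
  omega

lemma exists_three_le_degree_of_isCycle (hconn : G.Connected) {u : V} {c : G.Walk u u}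
    (hc : c.IsCycle) (hlt : c.length < Fintype.card V) : ∃ v, 3 ≤ G.degree v := by
  obtain ⟨x, hx⟩ := hc.exists_notMem_support hlt
  obtain ⟨⟨⟨v, w⟩, hvw⟩, -, hv, hw⟩ :=
    (hconn.preconnected u x).some.exists_boundary_dart {y | y ∈ c.support} c.start_mem_support hx
  simp only [Set.mem_ofPred_eq] at hv hw
  refine ⟨v, ?_⟩
  have hw' : w ∉ c.toSubgraph.neighborSet v := fun h =>
    hw ((c.mem_verts_toSubgraph).mp h.snd_mem)
  have hsub : insert w (c.toSubgraph.neighborSet v) ⊆ G.neighborSet v :=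
    Set.insert_subset hvw fun y hy => c.toSubgraph.adj_sub hy
  calc 3 = (insert w (c.toSubgraph.neighborSet v)).ncard := by
        rw [Set.ncard_insert_of_notMem hw', hc.ncard_neighborSet_toSubgraph_eq_two hv]
    _ ≤ (G.neighborSet v).ncard := Set.ncard_le_ncard hsub
    _ = G.degree v := by
        rw [Set.ncard_eq_toFinset_card', Set.toFinset_card, card_neighborSet_eq_degree]

end SimpleGraph

lemma four_mul_card_lt_sum_sq {ι : Type*} [Fintype ι] (d : ι → ℕ)
    (hsum : ∑ i, d i = 2 * Fintype.card ι) (hne : ∃ i, d i ≠ 2) :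
    4 * Fintype.card ι < ∑ i, d i ^ 2 := by
  obtain ⟨j, hj⟩ := hne
  have hpos : 0 < ∑ i, ((d i : ℤ) - 2) ^ 2 :=
    Finset.sum_pos' (fun i _ => sq_nonneg _)
      ⟨j, Finset.mem_univ j, sq_pos_iff.mpr (by omega)⟩
  have hexp : ∑ i, ((d i : ℤ) - 2) ^ 2 =
      ∑ i, (d i : ℤ) ^ 2 - 4 * ∑ i, (d i : ℤ) + 4 * Fintype.card ι := by
    simp only [show ∀ i, ((d i : ℤ) - 2) ^ 2 = (d i : ℤ) ^ 2 - 4 * d i + 4 from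
      fun i => by ring]
    simp [Finset.sum_add_distrib, Finset.sum_sub_distrib, Finset.mul_sum, mul_comm]
  zify at hsum ⊢
  linarith

theorem avgDeg_sq_unicyclic_girth_gt_four_general {n : ℕ}
    (U : SimpleGraph (Fin n)) (hU : IsUnicyclic U)
    (hg5 : 5 ≤ U.girth) (hgn : U.girth ≤ n - 1) :
    4 < avgDeg (gsq U) := by
  obtain ⟨hconn, hedges⟩ := hU
  have hcyc : ¬ U.IsAcyclic := fun h => by simp [girth_eq_zero.mpr h] at hg5
  have hegirth : 5 ≤ U.egirth := (Nat.cast_le.mpr hg5).trans (ENat.natCast_toNat_le_self _)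
  obtain ⟨u, c, hc, hlen⟩ := exists_girth_eq_length.mpr hcyc
  obtain ⟨v, hv⟩ := exists_three_le_degree_of_isCycle hconn hc (by rw [Fintype.card_fin]; omega)
  have hsum : ∑ v, U.degree v = 2 * Fintype.card (Fin n) := by
    rw [sum_degrees_eq_twice_card_edges, ← hedges, Set.ncard_eq_toFinset_card']
    rfl
  have hlt := (four_mul_card_lt_sum_sq _ hsum ⟨v, by omega⟩).trans_le
    (sum_degree_sq_le_sum_deg_gsq hegirth)
  rw [avgDeg, lt_div_iff₀ (by exact_mod_cast Fintype.card_pos_iff.mpr ⟨v⟩)]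
  exact_mod_cast hlt

/-- A unicyclic graph on `n ≥ 6` vertices with girth `g`,
`5 ≤ g ≤ n - 1`, has average degree of its square greater than 4. -/
theorem avgDeg_sq_unicyclic_girth_gt_four {n : ℕ} (hn : 6 ≤ n)
    (U : SimpleGraph (Fin n)) (hU : IsUnicyclic U)
    (hg5 : 5 ≤ U.girth) (hgn : U.girth ≤ n - 1) :
    4 < avgDeg (gsq U) :=
  avgDeg_sq_unicyclic_girth_gt_four_general U hU hg5 hgn
end
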